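/- Let n ∈ ℕ, c > 0, and let a, b ∈ ℝⁿ be unit vectors with ⟨a,b⟩ < 1. Define the hyperbolic inner product D(u,v) = ½·(d(0,u)² + d(0,v)² − d(u,v)²), where d is the rescaled Poincaré distance. Then D(r·a, r·b) tends to −∞ as r tends to 1/√c from the left (so the proposed inner product penalizes pairs of distinct directions approaching the boundary of the Poincaré ball). -/

import Mathlib

open Real
open scoped Classical

/-- Real inverse hyperbolic tangent. -/
noncomputable def artanhP (x : ℝ) : ℝ := (1 / 2) * Real.log ((1 + x) / (1 - x))

/-- Möbius addition on the Poincaré ball of curvature `c`. -/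
noncomputable def mobiusAdd {n : ℕ} (c : ℝ) (u v : EuclideanSpace ℝ (Fin n)) :
    EuclideanSpace ℝ (Fin n) :=
  (1 + 2 * c * (inner ℝ u v : ℝ) + c ^ 2 * ‖u‖ ^ 2 * ‖v‖ ^ 2)⁻¹ •
    ((1 + 2 * c * (inner ℝ u v : ℝ) + c * ‖v‖ ^ 2) • u + (1 - c * ‖u‖ ^ 2) • v)

/-- Logarithmic map at the origin of the Poincaré ball of curvature `c`. -/
noncomputable def plog {n : ℕ} (c : ℝ) (v : EuclideanSpace ℝ (Fin n)) :
    EuclideanSpace ℝ (Fin n) :=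
  if v = 0 then 0 else (artanhP (Real.sqrt c * ‖v‖) / (Real.sqrt c * ‖v‖)) • v

/-- Exponential map at the origin of the Poincaré ball of curvature `c`. -/
noncomputable def pexp {n : ℕ} (c : ℝ) (x : EuclideanSpace ℝ (Fin n)) :
    EuclideanSpace ℝ (Fin n) :=
  if x = 0 then 0 else (Real.tanh (Real.sqrt c * ‖x‖) / (Real.sqrt c * ‖x‖)) • x

/-- The (rescaled) Poincaré distance of curvature `c`. -/
noncomputable def pdist {n : ℕ} (c : ℝ) (u v : EuclideanSpace ℝ (Fin n)) : ℝ :=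
  (1 / Real.sqrt c) * artanhP (Real.sqrt c * ‖mobiusAdd c (-u) v‖)

/-- The hyperbolic inner product `D(u,v) = ½(d(0,u)² + d(0,v)² − d(u,v)²)`. -/
noncomputable def phyperInner {n : ℕ} (c : ℝ) (u v : EuclideanSpace ℝ (Fin n)) : ℝ :=
  (1 / 2) * (pdist c 0 u ^ 2 + pdist c 0 v ^ 2 - pdist c u v ^ 2)

/-! With `x = √c r` one has `√c d(0, r a) = artanh x` and `√c d(r a, r b) = artanh w`, where
`1 - w² = (1 - x²)² / (1 - 2⟪a, b⟫ x² + x⁴)`. Writing `artanh y = log (1 + y) - log (1 - y²) / 2`,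
the squared factor `(1 - x²)²` shows that `artanh w = 2 artanh x + O(1)` as `x → 1⁻`, the error
tending to `log (2 - 2⟪a, b⟫) / 2 - log 2`; this is finite exactly because `⟪a, b⟫ < 1`.
Hence `2c D(r a, r b) = 2 artanh² x - (2 artanh x + O(1))² → -∞`. -/

open Filter Topology

lemma tendsto_const_mul_nhdsLT {k : ℝ} (hk : 0 < k) (a : ℝ) :
    Tendsto (k * ·) (𝓝[<] a) (𝓝[<] (k * a)) :=
  tendsto_nhdsWithin_iff.2
    ⟨((continuous_const_mul k).tendsto a).mono_left nhdsWithin_le_nhds,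
      eventually_nhdsWithin_of_forall fun _ hx => mul_lt_mul_of_pos_left hx hk⟩

lemma tendsto_one_sub_nhdsLT_one : Tendsto (1 - ·) (𝓝[<] (1 : ℝ)) (𝓝[>] 0) := by
  refine tendsto_nhdsWithin_iff.2
    ⟨?_, eventually_nhdsWithin_of_forall fun _ hx => Set.mem_Ioi.2 (sub_pos.2 hx)⟩
  simpa using ((continuous_sub_left (1 : ℝ)).tendsto 1).mono_left nhdsWithin_le_nhds

lemma Filter.Tendsto.two_mul_sq_sub_sq_atBot {α : Type*} {l : Filter α} {f g : α → ℝ} {L : ℝ}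
    (hf : Tendsto f l atTop) (hgf : Tendsto (fun t => g t - 2 * f t) l (𝓝 L)) :
    Tendsto (fun t => 2 * f t ^ 2 - g t ^ 2) l atBot := by
  -- `2 f² - g² = -(f (2 f + 4 h) + h²)` with `h = g - 2 f` convergent
  have h := (hf.atTop_mul_atTop₀
    ((hf.const_mul_atTop two_pos).atTop_add (hgf.const_mul 4))).atTop_add (hgf.pow 2)
  exact (tendsto_neg_atTop_atBot.comp h).congr fun t => by simp only [Function.comp]; ring

lemma tendsto_artanhP_nhdsLT_one : Tendsto artanhP (𝓝[<] 1) atTop := by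
  have hquot : Tendsto (fun x : ℝ => (1 + x) * (1 - x)⁻¹) (𝓝[<] 1) atTop := by
    refine Tendsto.pos_mul_atTop two_pos ?_
      (tendsto_inv_nhdsGT_zero.comp tendsto_one_sub_nhdsLT_one)
    simpa [one_add_one_eq_two] using
      ((continuous_const_add (1 : ℝ)).tendsto 1).mono_left nhdsWithin_le_nhds
  exact (tendsto_log_atTop.comp hquot).const_mul_atTop one_half_pos

lemma artanhP_eq_log_sub_half_log {y : ℝ} (hy : y ∈ Set.Ioo (-1) 1) :
    artanhP y = log (1 + y) - log (1 - y ^ 2) / 2 := by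
  obtain ⟨hy₁, hy₂⟩ := hy
  have h₁ : 0 < 1 + y := by linarith
  have h₂ : 0 < 1 - y := by linarith
  rw [artanhP, show 1 - y ^ 2 = (1 + y) * (1 - y) by ring, log_div h₁.ne' h₂.ne',
    log_mul h₁.ne' h₂.ne']
  ring

lemma norm_mobiusAdd_neg_sq {n : ℕ} (c : ℝ) (u v : EuclideanSpace ℝ (Fin n)) :
    ‖mobiusAdd c (-u) v‖ ^ 2
      = ‖u - v‖ ^ 2 / (1 - 2 * c * inner ℝ u v + c ^ 2 * ‖u‖ ^ 2 * ‖v‖ ^ 2) := by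
  set D := 1 - 2 * c * inner ℝ u v + c ^ 2 * ‖u‖ ^ 2 * ‖v‖ ^ 2
  have hnum : ‖(1 + 2 * c * inner ℝ (-u) v + c * ‖v‖ ^ 2) • -u + (1 - c * ‖-u‖ ^ 2) • v‖ ^ 2
      = ‖u - v‖ ^ 2 * D := by
    rw [norm_add_sq_real, norm_smul, norm_smul, real_inner_smul_left, real_inner_smul_right,
      norm_sub_sq_real]
    simp only [inner_neg_left, norm_neg, Real.norm_eq_abs, mul_pow, sq_abs, D]
    ring
  have hden : 1 + 2 * c * inner ℝ (-u) v + c ^ 2 * ‖-u‖ ^ 2 * ‖v‖ ^ 2 = D := by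
    rw [inner_neg_left, norm_neg]; ring
  rw [mobiusAdd, norm_smul, mul_pow, hnum, hden, norm_inv, Real.norm_eq_abs, inv_pow, sq_abs]
  rcases eq_or_ne D 0 with hD | hD
  · simp [hD]
  · field_simp

lemma mobiusAdd_zero_left {n : ℕ} (c : ℝ) (v : EuclideanSpace ℝ (Fin n)) :
    mobiusAdd c 0 v = v := by
  simp [mobiusAdd]

lemma pdist_zero_left {n : ℕ} (c : ℝ) (v : EuclideanSpace ℝ (Fin n)) :
    pdist c 0 v = artanhP (√c * ‖v‖) / √c := by
  rw [pdist, neg_zero, mobiusAdd_zero_left]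
  ring

lemma one_sub_two_mul_mul_sq_add_pow_four_pos {p : ℝ} (hp : p < 1) (x : ℝ) :
    0 < 1 - 2 * p * x ^ 2 + x ^ 4 := by
  nlinarith [sq_nonneg (1 - x ^ 2), sq_nonneg (x ^ 2 - p),
    mul_nonneg (sub_nonneg.2 hp.le) (sq_nonneg x)]

/-- For unit vectors `a, b` with `⟪a, b⟫ = p`, this is `‖(-(x • a)) ⊕₁ (x • b)‖`. -/
noncomputable def rayMobiusNorm (p x : ℝ) : ℝ :=
  √(x ^ 2 * (2 - 2 * p) / (1 - 2 * p * x ^ 2 + x ^ 4))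

lemma rayMobiusNorm_nonneg (p x : ℝ) : 0 ≤ rayMobiusNorm p x := sqrt_nonneg _

section rayMobiusNorm

variable {p : ℝ}

lemma one_sub_rayMobiusNorm_sq (hp : p < 1) (x : ℝ) :
    1 - rayMobiusNorm p x ^ 2 = (1 - x ^ 2) ^ 2 / (1 - 2 * p * x ^ 2 + x ^ 4) := by
  have hD := one_sub_two_mul_mul_sq_add_pow_four_pos hp x
  have : 0 ≤ 2 - 2 * p := by linarith
  rw [rayMobiusNorm, sq_sqrt (by positivity), eq_div_iff hD.ne', sub_mul,
    div_mul_cancel₀ _ hD.ne']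
  ring

lemma rayMobiusNorm_lt_one (hp : p < 1) {x : ℝ} (hx : x ∈ Set.Ioo (-1) 1) :
    rayMobiusNorm p x < 1 := by
  have hD := one_sub_two_mul_mul_sq_add_pow_four_pos hp x
  have hx2 : 0 < 1 - x ^ 2 := by nlinarith [hx.1, hx.2]
  have : 0 < 1 - rayMobiusNorm p x ^ 2 := by
    rw [one_sub_rayMobiusNorm_sq hp]; positivity
  nlinarith [rayMobiusNorm_nonneg p x]

lemma continuous_rayMobiusNorm (hp : p < 1) : Continuous (rayMobiusNorm p) :=
  ((by fun_prop : Continuous fun x : ℝ => x ^ 2 * (2 - 2 * p)).div (by fun_prop)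
    fun x => (one_sub_two_mul_mul_sq_add_pow_four_pos hp x).ne').sqrt

lemma rayMobiusNorm_one (hp : p < 1) : rayMobiusNorm p 1 = 1 := by
  rw [rayMobiusNorm, show (1 : ℝ) - 2 * p * 1 ^ 2 + 1 ^ 4 = 1 ^ 2 * (2 - 2 * p) by ring,
    div_self (by nlinarith), sqrt_one]

lemma artanhP_rayMobiusNorm_sub_two_mul_artanhP (hp : p < 1) {x : ℝ} (hx : x ∈ Set.Ioo (-1) 1) :
    artanhP (rayMobiusNorm p x) - 2 * artanhP x
      = log (1 + rayMobiusNorm p x) + log (1 - 2 * p * x ^ 2 + x ^ 4) / 2 - 2 * log (1 + x) := by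
  have hD := one_sub_two_mul_mul_sq_add_pow_four_pos hp x
  have hx2 : 0 < 1 - x ^ 2 := by nlinarith [hx.1, hx.2]
  have hw : rayMobiusNorm p x ∈ Set.Ioo (-1) 1 :=
    ⟨by linarith [rayMobiusNorm_nonneg p x], rayMobiusNorm_lt_one hp hx⟩
  rw [artanhP_eq_log_sub_half_log hw, artanhP_eq_log_sub_half_log hx, one_sub_rayMobiusNorm_sq hp,
    log_div (by positivity) hD.ne', log_pow]
  push_cast
  ring

lemma tendsto_artanhP_rayMobiusNorm_sub_two_mul_artanhP (hp : p < 1) :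
    Tendsto (fun x => artanhP (rayMobiusNorm p x) - 2 * artanhP x) (𝓝[<] 1)
      (𝓝 (log (2 - 2 * p) / 2 - log 2)) := by
  have hw : Tendsto (rayMobiusNorm p) (𝓝[<] 1) (𝓝 1) :=
    ((continuous_rayMobiusNorm hp).tendsto' 1 1 (rayMobiusNorm_one hp)).mono_left
      nhdsWithin_le_nhds
  have hD : Tendsto (fun x : ℝ => 1 - 2 * p * x ^ 2 + x ^ 4) (𝓝[<] 1) (𝓝 (2 - 2 * p)) := by
    have := ((by fun_prop : Continuous fun x : ℝ => 1 - 2 * p * x ^ 2 + x ^ 4).tendsto 1).mono_left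
      (nhdsWithin_le_nhds (s := Set.Iio 1))
    convert this using 2
    ring
  have hx : Tendsto (fun x : ℝ => 1 + x) (𝓝[<] 1) (𝓝 (1 + 1)) :=
    (tendsto_id.mono_left nhdsWithin_le_nhds).const_add 1
  have hlim := (((hw.const_add 1).log (by norm_num)).add ((hD.log (by linarith)).div_const 2)).sub
    ((hx.log (by norm_num)).const_mul 2)
  refine (hlim.congr' ?_).trans_eq (by norm_num; ring)
  filter_upwards [Ioo_mem_nhdsLT (show (-1 : ℝ) < 1 by norm_num)] with x hx
  exact (artanhP_rayMobiusNorm_sub_two_mul_artanhP hp hx).symm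

end rayMobiusNorm

lemma sqrt_mul_norm_mobiusAdd_neg_smul_smul {n : ℕ} {c : ℝ} (hc : 0 ≤ c)
    {a b : EuclideanSpace ℝ (Fin n)} (ha : ‖a‖ = 1) (hb : ‖b‖ = 1) (r : ℝ) :
    √c * ‖mobiusAdd c (-(r • a)) (r • b)‖ = rayMobiusNorm (inner ℝ a b) (√c * r) := by
  rw [rayMobiusNorm, ← sqrt_sq (norm_nonneg (mobiusAdd _ _ _)), ← sqrt_mul hc,
    norm_mobiusAdd_neg_sq, ← smul_sub]
  have h4 : √c ^ 4 = c ^ 2 := by rw [show 4 = 2 * 2 from rfl, pow_mul, sq_sqrt hc]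
  simp only [norm_smul, mul_pow, norm_sub_sq_real, real_inner_smul_left, real_inner_smul_right, ha,
    hb, sq_sqrt hc, h4, Real.norm_eq_abs, sq_abs]
  ring_nf

lemma phyperInner_smul_smul {n : ℕ} {c : ℝ} (hc : 0 < c)
    {a b : EuclideanSpace ℝ (Fin n)} (ha : ‖a‖ = 1) (hb : ‖b‖ = 1) {r : ℝ} (hr : 0 ≤ r) :
    phyperInner c (r • a) (r • b)
      = (2 * artanhP (√c * r) ^ 2 - artanhP (rayMobiusNorm (inner ℝ a b) (√c * r)) ^ 2)
        / (2 * c) := by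
  have hnorm : ∀ v : EuclideanSpace ℝ (Fin n), ‖v‖ = 1 → ‖r • v‖ = r := fun v hv => by
    rw [norm_smul, hv, mul_one, Real.norm_of_nonneg hr]
  rw [phyperInner, pdist_zero_left, pdist_zero_left, hnorm a ha, hnorm b hb, pdist,
    sqrt_mul_norm_mobiusAdd_neg_smul_smul hc.le ha hb]
  have hs : √c ^ 2 = c := sq_sqrt hc.le
  have hs0 : √c ≠ 0 := (sqrt_pos.2 hc).ne'
  field_simp
  rw [hs]
  ring

/-- For distinct unit directions `a, b`, the hyperbolic inner product
`D(r·a, r·b)` tends to `−∞` as `r → (1/√c)⁻`. -/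
theorem phyperInner_tendsto_atBot {n : ℕ} (c : ℝ) (hc : 0 < c)
    (a b : EuclideanSpace ℝ (Fin n)) (ha : ‖a‖ = 1) (hb : ‖b‖ = 1)
    (hab : (inner ℝ a b : ℝ) < 1) :
    Filter.Tendsto (fun r : ℝ => phyperInner c (r • a) (r • b))
      (nhdsWithin (1 / Real.sqrt c) (Set.Iio (1 / Real.sqrt c))) Filter.atBot := by
  have hs : 0 < √c := sqrt_pos.2 hc
  have hx : Tendsto (√c * ·) (𝓝[<] (1 / √c)) (𝓝[<] 1) := by
    simpa only [mul_one_div_cancel hs.ne'] using tendsto_const_mul_nhdsLT hs (1 / √c)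
  have hlim := (tendsto_artanhP_nhdsLT_one.comp hx).two_mul_sq_sub_sq_atBot
    ((tendsto_artanhP_rayMobiusNorm_sub_two_mul_artanhP hab).comp hx)
  refine (hlim.atBot_div_const (by positivity : 0 < 2 * c)).congr' ?_
  filter_upwards [Ioo_mem_nhdsLT (by positivity : 0 < 1 / √c)] with r hr
  exact (phyperInner_smul_smul hc ha hb hr.1.le).symm
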